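/- arXiv:2604.07275 — 5 statements merged into one kernel-verified Lean document; each statement's English description precedes it below -/
import Mathlib

section
/- For λ>0, t≥0, and 0 < u ≤ 1, the probability generating function of N̂(t) satisfies Σ_{n=0}^∞ u^n ((λt)^{2n}/(2n)! + (λt)^{2n+1}/(2n+1)!) e^{−λt} = ((√u+1)/(2√u)) e^{−λ(1−√u)t} + ((√u−1)/(2√u)) e^{−λ(1+√u)t}. -/
/-! With `s = √u`, the weights `uⁿ = s²ⁿ` turn the even and odd parts of the series into those
of `cosh (s λt)` and `sinh (s λt) / s`, and rewriting `cosh` and `sinh` through `exp` gives the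
two exponentials. -/

open Real

theorem hasSum_sq_pow_mul_even_add_odd (s x : ℝ) (hs : s ≠ 0) :
    HasSum (fun n : ℕ => (s ^ 2) ^ n * (x ^ (2 * n) / ((2 * n).factorial : ℝ)
        + x ^ (2 * n + 1) / ((2 * n + 1).factorial : ℝ)))
      (cosh (s * x) + sinh (s * x) / s) := by
  convert (hasSum_cosh (s * x)).add ((hasSum_sinh (s * x)).div_const s) using 1
  funext n
  rw [mul_pow, mul_pow, pow_succ s, pow_mul s]
  field_simp
  ring

theorem cosh_add_sinh_div_eq (s a : ℝ) (hs : s ≠ 0) :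
    cosh a + sinh a / s = (s + 1) / (2 * s) * exp a + (s - 1) / (2 * s) * exp (-a) := by
  rw [cosh_eq, sinh_eq]
  field_simp
  ring

theorem stmt2_general (l t u : ℝ) (hu0 : 0 < u) :
    ∑' n : ℕ, u ^ n * ((l * t) ^ (2 * n) / ((2 * n).factorial : ℝ)
        + (l * t) ^ (2 * n + 1) / ((2 * n + 1).factorial : ℝ)) * Real.exp (-(l * t))
      = (Real.sqrt u + 1) / (2 * Real.sqrt u) * Real.exp (-(l * (1 - Real.sqrt u) * t))
        + (Real.sqrt u - 1) / (2 * Real.sqrt u) * Real.exp (-(l * (1 + Real.sqrt u) * t)) := by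
  have hs : sqrt u ≠ 0 := (sqrt_pos.2 hu0).ne'
  have hsum := hasSum_sq_pow_mul_even_add_odd (sqrt u) (l * t) hs
  rw [sq_sqrt hu0.le] at hsum
  rw [tsum_mul_right, hsum.tsum_eq, cosh_add_sinh_div_eq _ _ hs]
  have hminus : -(l * (1 - sqrt u) * t) = sqrt u * (l * t) + -(l * t) := by ring
  have hplus : -(l * (1 + sqrt u) * t) = -(sqrt u * (l * t)) + -(l * t) := by ring
  rw [hminus, hplus, exp_add, exp_add]
  ring

theorem stmt2 (l t u : ℝ) (hl : 0 < l) (ht : 0 ≤ t) (hu0 : 0 < u) (hu1 : u ≤ 1) :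
    ∑' n : ℕ, u ^ n * ((l * t) ^ (2 * n) / ((2 * n).factorial : ℝ)
        + (l * t) ^ (2 * n + 1) / ((2 * n + 1).factorial : ℝ)) * Real.exp (-(l * t))
      = (Real.sqrt u + 1) / (2 * Real.sqrt u) * Real.exp (-(l * (1 - Real.sqrt u) * t))
        + (Real.sqrt u - 1) / (2 * Real.sqrt u) * Real.exp (-(l * (1 + Real.sqrt u) * t)) :=
  stmt2_general l t u hu0
end

section
/- For α>0, β>0, ζ>0, γ>0, σ>0, a ∈ ℝ and x>0, the convolution identity ∫_0^x (x−t)^{β−1} E^γ_{α,β}(a(x−t)^α) · t^{ζ−1} E^σ_{α,ζ}(a t^α) dt = x^{β+ζ−1} E^{γ+σ}_{α,β+ζ}(a x^α) holds. -/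
/-!
For `t > 0` both kernels expand into Riemann–Liouville kernels `t^(p-1)/Γ(p)`:
`t^(β-1) E^γ_{α,β}(a t^α) = ∑ⱼ (γ)ⱼ/j! · aʲ · t^(jα+β-1)/Γ(jα+β)`.
By the Beta integral these kernels convolve as `t^(p-1)/Γ(p) ∗ t^(q-1)/Γ(q) = t^(p+q-1)/Γ(p+q)`,
so integrating the Cauchy product of the two series term by term (justified because everything
is dominated by the same series with `|a|`) gives
`∑ₙ (∑_{i+j=n} (γ)ᵢ/i! (σ)ⱼ/j!) aⁿ x^(nα+β+ζ-1)/Γ(nα+β+ζ)`, and Chu–Vandermonde turns the inner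
sum into `(γ+σ)ₙ/n!`. The series converge by the ratio test, since log-convexity of `Γ` gives
`Γ(y)/Γ(y+α) ≤ (y-1)^(-α)`.
-/

noncomputable def ml3 (α β γ x : ℝ) : ℝ :=
  if γ = 0 then 1 / Real.Gamma β
  else (1 / Real.Gamma γ) *
    ∑' j : ℕ, Real.Gamma ((j : ℝ) + γ) * x ^ j / ((j.factorial : ℝ) * Real.Gamma ((j : ℝ) * α + β))

open Real MeasureTheory Filter Finset Topology

theorem ascPochhammer_eval_add {R : Type*} [CommSemiring R] (r s : R) (n : ℕ) :
    (ascPochhammer R n).eval (r + s) = ∑ ij ∈ antidiagonal n,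
      (n.choose ij.1 : R) * ((ascPochhammer R ij.1).eval r * (ascPochhammer R ij.2).eval s) := by
  induction n with
  | zero => simp
  | succ n ih =>
    rw [sum_antidiagonal_choose_succ_mul
      (fun i j => (ascPochhammer R i).eval r * (ascPochhammer R j).eval s),
      ascPochhammer_succ_eval, ih, sum_mul, ← sum_add_distrib]
    refine sum_congr rfl fun ij hij => ?_
    have hn : ij.1 + ij.2 = n := mem_antidiagonal.mp hij
    rw [← Nat.choose_symm_of_eq_add hn.symm, ascPochhammer_succ_eval, ascPochhammer_succ_eval,
      ← hn]
    push_cast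
    ring

theorem Real.Gamma_add_nat_eq_ascPochhammer_mul {γ : ℝ} (hγ : 0 < γ) (n : ℕ) :
    Gamma (γ + n) = (ascPochhammer ℝ n).eval γ * Gamma γ := by
  induction n with
  | zero => simp
  | succ n ih =>
    rw [Nat.cast_succ, ← add_assoc, Gamma_add_one (by positivity), ih, ascPochhammer_succ_eval]
    ring

theorem Real.Gamma_div_Gamma_add_le_rpow {y α : ℝ} (hy : 1 < y) (hα : 0 < α) :
    Gamma y / Gamma (y + α) ≤ (y - 1) ^ (-α) := by
  have hG : 0 < Gamma y := Gamma_pos_of_pos (by linarith)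
  have hGα : 0 < Gamma (y + α) := Gamma_pos_of_pos (by linarith)
  -- the slope of `log ∘ Gamma` on `[y - 1, y]` is `log (y - 1)`, and slopes increase
  have hslope := convexOn_log_Gamma.slope_mono_adjacent (x := y - 1) (y := y) (z := y + α)
    (Set.mem_Ioi.2 (by linarith)) (Set.mem_Ioi.2 (by linarith)) (by linarith) (by linarith)
  have hstep : log (Gamma y) - log (Gamma (y - 1)) = log (y - 1) := by
    have hrec := Gamma_add_one (s := y - 1) (by linarith)
    rw [sub_add_cancel] at hrec
    rw [hrec, log_mul (by linarith) (Gamma_pos_of_pos (by linarith)).ne', add_sub_cancel_right]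
  simp only [Function.comp, sub_sub_cancel, div_one, add_sub_cancel_left, hstep] at hslope
  have hpow : (y - 1) ^ α ≤ Gamma (y + α) / Gamma y := by
    rw [← log_le_log_iff (by positivity) (by positivity), log_rpow (by linarith),
      log_div hGα.ne' hG.ne']
    rw [le_div_iff₀ hα] at hslope
    linarith
  rw [rpow_neg (by linarith), div_le_iff₀ hGα, inv_mul_eq_div, le_div_iff₀ (by positivity)]
  rwa [le_div_iff₀ hG, mul_comm] at hpow

theorem Real.tendsto_Gamma_div_Gamma_add_atTop {α : ℝ} (hα : 0 < α) :
    Tendsto (fun y => Gamma y / Gamma (y + α)) atTop (𝓝 0) := by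
  have hbound : Tendsto (fun y : ℝ => (y - 1) ^ (-α)) atTop (𝓝 0) :=
    (tendsto_rpow_neg_atTop hα).comp (tendsto_atTop_add_const_right _ (-1) tendsto_id)
  refine squeeze_zero' ?_ ?_ hbound
  · filter_upwards [eventually_gt_atTop 0] with y hy
    exact div_nonneg (Gamma_pos_of_pos hy).le (Gamma_pos_of_pos (by linarith)).le
  · filter_upwards [eventually_gt_atTop 1] with y hy using Gamma_div_Gamma_add_le_rpow hy hα

-- the `n`-th Taylor coefficient of `(1 - z) ^ (-γ)`
noncomputable def risingCoeff (γ : ℝ) (n : ℕ) : ℝ := (ascPochhammer ℝ n).eval γ / n.factorial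

theorem risingCoeff_succ (γ : ℝ) (n : ℕ) :
    risingCoeff γ (n + 1) = risingCoeff γ n * ((γ + n) / (n + 1)) := by
  rw [risingCoeff, risingCoeff, ascPochhammer_succ_eval, Nat.factorial_succ]
  push_cast
  field_simp

theorem risingCoeff_pos {γ : ℝ} (hγ : 0 < γ) (n : ℕ) : 0 < risingCoeff γ n :=
  div_pos (ascPochhammer_pos n γ hγ) (by positivity)

theorem sum_antidiagonal_risingCoeff (γ σ : ℝ) (n : ℕ) :
    ∑ ij ∈ antidiagonal n, risingCoeff γ ij.1 * risingCoeff σ ij.2 = risingCoeff (γ + σ) n := by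
  rw [risingCoeff, ascPochhammer_eval_add, sum_div]
  refine sum_congr rfl fun ij hij => ?_
  have hfac : (n.factorial : ℝ) = n.choose ij.1 * (ij.1.factorial * ij.2.factorial) := by
    rw [← mem_antidiagonal.mp hij]
    norm_cast
    rw [← Nat.add_choose_mul_factorial_mul_factorial, Nat.choose_symm_add, mul_assoc]
  have hchoose : (n.choose ij.1 : ℝ) ≠ 0 :=
    Nat.cast_ne_zero.mpr (Nat.choose_pos (HasAntidiagonal.antidiagonal.fst_le hij)).ne'
  rw [risingCoeff, risingCoeff, hfac]
  field_simp

theorem summable_risingCoeff_mul_pow_div_Gamma {α : ℝ} (hα : 0 < α) (β γ r : ℝ) :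
    Summable fun j : ℕ => risingCoeff γ j * r ^ j / Gamma (j * α + β) := by
  have hlin : Tendsto (fun j : ℕ => (j : ℝ) * α + β) atTop atTop :=
    tendsto_atTop_add_const_right _ β (tendsto_natCast_atTop_atTop.atTop_mul_const hα)
  have hratio : Tendsto (fun j : ℕ => (|γ| + 1) * |r| *
      (Gamma (j * α + β) / Gamma (j * α + β + α))) atTop (𝓝 0) := by
    simpa using ((tendsto_Gamma_div_Gamma_add_atTop hα).comp hlin).const_mul ((|γ| + 1) * |r|)
  refine summable_of_ratio_norm_eventually_le (r := 1 / 2) (by norm_num) ?_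
  filter_upwards [hratio.eventually (gt_mem_nhds (by norm_num : (0 : ℝ) < 1 / 2)),
    hlin.eventually (eventually_gt_atTop 0)] with j hj hyj
  have hΓ : 0 < Gamma (j * α + β) := Gamma_pos_of_pos hyj
  have hΓα : 0 < Gamma (j * α + β + α) := Gamma_pos_of_pos (by linarith)
  have hcoeff : |γ + j| / (j + 1) ≤ |γ| + 1 := by
    rw [div_le_iff₀ (by positivity)]
    have := abs_add_le γ j
    rw [Nat.abs_cast] at this
    nlinarith [abs_nonneg γ]
  have hnext : ‖risingCoeff γ (j + 1) * r ^ (j + 1) / Gamma ((j + 1 : ℕ) * α + β)‖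
      = ‖risingCoeff γ j * r ^ j / Gamma (j * α + β)‖
        * (|γ + j| / (j + 1) * |r| * (Gamma (j * α + β) / Gamma (j * α + β + α))) := by
    rw [risingCoeff_succ, show ((j + 1 : ℕ) : ℝ) * α + β = j * α + β + α by push_cast; ring]
    simp only [norm_div, norm_mul, norm_pow, Real.norm_eq_abs, abs_of_pos hΓ, abs_of_pos hΓα,
      abs_of_pos (by positivity : (0 : ℝ) < j + 1)]
    field_simp
    ring
  rw [hnext, mul_comm (1 / 2 : ℝ)]
  refine mul_le_mul_of_nonneg_left ?_ (norm_nonneg _)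
  calc |γ + j| / (j + 1) * |r| * (Gamma (j * α + β) / Gamma (j * α + β + α))
      ≤ (|γ| + 1) * |r| * (Gamma (j * α + β) / Gamma (j * α + β + α)) := by gcongr
    _ ≤ 1 / 2 := hj.le

theorem integral_sub_rpow_mul_rpow {p q x : ℝ} (hp : 0 < p) (hq : 0 < q) (hx : 0 < x) :
    ∫ t in (0 : ℝ)..x, (x - t) ^ (p - 1) * t ^ (q - 1)
      = Gamma p * Gamma q / Gamma (p + q) * x ^ (p + q - 1) := by
  have hscaled := Complex.betaIntegral_scaled q p hx
  rw [Complex.betaIntegral_eq_Gamma_mul_div _ _ (by simpa using hq) (by simpa using hp)] at hscaled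
  have hcast : ∀ t ∈ Set.uIcc 0 x, (((x - t) ^ (p - 1) * t ^ (q - 1) : ℝ) : ℂ)
      = (t : ℂ) ^ ((q : ℂ) - 1) * ((x : ℂ) - t) ^ ((p : ℂ) - 1) := by
    intro t ht
    rw [Set.uIcc_of_le hx.le] at ht
    rw [Complex.ofReal_mul, Complex.ofReal_cpow (by linarith [ht.2]),
      Complex.ofReal_cpow ht.1, mul_comm]
    push_cast
    ring
  rw [← intervalIntegral.integral_congr hcast, intervalIntegral.integral_ofReal] at hscaled
  apply Complex.ofReal_injective
  rw [hscaled]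
  simp only [Complex.ofReal_mul, Complex.ofReal_div, Complex.ofReal_cpow hx.le,
    ← Complex.Gamma_ofReal, Complex.ofReal_add, Complex.ofReal_sub, Complex.ofReal_one]
  ring_nf

noncomputable def powDivGamma (p t : ℝ) : ℝ := t ^ (p - 1) / Gamma p

theorem powDivGamma_nonneg {p t : ℝ} (hp : 0 < p) (ht : 0 ≤ t) : 0 ≤ powDivGamma p t :=
  div_nonneg (rpow_nonneg ht _) (Gamma_pos_of_pos hp).le

theorem integral_powDivGamma_mul_powDivGamma {p q x : ℝ} (hp : 0 < p) (hq : 0 < q)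
    (hx : 0 < x) :
    ∫ t in (0 : ℝ)..x, powDivGamma p (x - t) * powDivGamma q t = powDivGamma (p + q) x := by
  have hΓp := (Gamma_pos_of_pos hp).ne'
  have hΓq := (Gamma_pos_of_pos hq).ne'
  simp only [powDivGamma, div_mul_div_comm]
  rw [intervalIntegral.integral_div, integral_sub_rpow_mul_rpow hp hq hx]
  field_simp

theorem intervalIntegrable_powDivGamma_mul_powDivGamma {p q x : ℝ} (hp : 0 < p) (hq : 0 < q)
    (hx : 0 < x) :
    IntervalIntegrable (fun t => powDivGamma p (x - t) * powDivGamma q t) volume 0 x := by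
  refine intervalIntegral.intervalIntegrable_of_integral_ne_zero ?_
  rw [integral_powDivGamma_mul_powDivGamma hp hq hx]
  exact (div_pos (rpow_pos_of_pos hx _) (Gamma_pos_of_pos (add_pos hp hq))).ne'

noncomputable def mlTerm (α β γ a : ℝ) (j : ℕ) (t : ℝ) : ℝ :=
  risingCoeff γ j * a ^ j * powDivGamma (j * α + β) t

theorem mlTerm_eq {α β γ a t : ℝ} (ht : 0 < t) (j : ℕ) :
    mlTerm α β γ a j t
      = t ^ (β - 1) * (risingCoeff γ j * (a * t ^ α) ^ j / Gamma (j * α + β)) := by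
  rw [mlTerm, powDivGamma, show (j : ℝ) * α + β - 1 = (β - 1) + α * j by ring, rpow_add ht,
    rpow_mul ht.le, rpow_natCast]
  ring

theorem summable_mlTerm {α t : ℝ} (hα : 0 < α) (β γ a : ℝ) (ht : 0 < t) :
    Summable fun j => mlTerm α β γ a j t := by
  simpa only [mlTerm_eq ht] using
    (summable_risingCoeff_mul_pow_div_Gamma hα β γ (a * t ^ α)).mul_left (t ^ (β - 1))

theorem rpow_mul_ml3_eq_tsum (α β : ℝ) {γ t : ℝ} (hγ : 0 < γ) (a : ℝ) (ht : 0 < t) :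
    t ^ (β - 1) * ml3 α β γ (a * t ^ α) = ∑' j, mlTerm α β γ a j t := by
  have hΓ := (Gamma_pos_of_pos hγ).ne'
  simp only [mlTerm_eq ht, ml3, if_neg hγ.ne', tsum_mul_left, ← mul_assoc]
  rw [← tsum_mul_left, ← tsum_mul_left]
  refine tsum_congr fun j => ?_
  rw [add_comm, Gamma_add_nat_eq_ascPochhammer_mul hγ, risingCoeff]
  field_simp

theorem abs_mlTerm {α β γ t : ℝ} (hα : 0 ≤ α) (hβ : 0 < β) (hγ : 0 < γ) (a : ℝ) (j : ℕ)
    (ht : 0 ≤ t) : |mlTerm α β γ a j t| = mlTerm α β γ |a| j t := by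
  rw [mlTerm, mlTerm, abs_mul, abs_mul, abs_pow, abs_of_pos (risingCoeff_pos hγ j),
    abs_of_nonneg (powDivGamma_nonneg (by positivity) ht)]

section Convolution

variable (α β ζ γ σ a x : ℝ)

noncomputable def mlConvTerm (n : ℕ) (t : ℝ) : ℝ :=
  ∑ ij ∈ antidiagonal n, mlTerm α β γ a ij.1 (x - t) * mlTerm α ζ σ a ij.2 t

variable {α β ζ γ σ x}

theorem mul_ml3_eq_tsum_mlConvTerm (hα : 0 < α) (hγ : 0 < γ) (hσ : 0 < σ) {t : ℝ}
    (ht : t ∈ Set.Ioo 0 x) :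
    (x - t) ^ (β - 1) * ml3 α β γ (a * (x - t) ^ α) * (t ^ (ζ - 1) * ml3 α ζ σ (a * t ^ α))
      = ∑' n, mlConvTerm α β ζ γ σ a x n t := by
  have hxt : 0 < x - t := sub_pos.2 ht.2
  rw [rpow_mul_ml3_eq_tsum α β hγ a hxt, rpow_mul_ml3_eq_tsum α ζ hσ a ht.1]
  exact tsum_mul_tsum_eq_tsum_sum_antidiagonal_of_summable_norm
    (summable_mlTerm hα β γ a hxt).norm (summable_mlTerm hα ζ σ a ht.1).norm

theorem intervalIntegrable_mlTerm_mul_mlTerm (hα : 0 ≤ α) (hβ : 0 < β) (hζ : 0 < ζ)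
    (hx : 0 < x) (i j : ℕ) :
    IntervalIntegrable (fun t => mlTerm α β γ a i (x - t) * mlTerm α ζ σ a j t) volume 0 x := by
  simpa only [mlTerm, mul_mul_mul_comm] using
    (intervalIntegrable_powDivGamma_mul_powDivGamma (p := i * α + β) (q := j * α + ζ)
      (by positivity) (by positivity) hx).const_mul
      (risingCoeff γ i * a ^ i * (risingCoeff σ j * a ^ j))

theorem intervalIntegrable_mlConvTerm (hα : 0 ≤ α) (hβ : 0 < β) (hζ : 0 < ζ) (hx : 0 < x)
    (n : ℕ) : IntervalIntegrable (mlConvTerm α β ζ γ σ a x n) volume 0 x := by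
  have hsum : mlConvTerm α β ζ γ σ a x n
      = ∑ ij ∈ antidiagonal n, fun t => mlTerm α β γ a ij.1 (x - t) * mlTerm α ζ σ a ij.2 t := by
    ext t
    simp only [mlConvTerm, Finset.sum_apply]
  rw [hsum]
  exact IntervalIntegrable.sum _ fun ij _ =>
    intervalIntegrable_mlTerm_mul_mlTerm a hα hβ hζ hx ij.1 ij.2

theorem integral_mlTerm_mul_mlTerm (hα : 0 ≤ α) (hβ : 0 < β) (hζ : 0 < ζ) (hx : 0 < x)
    (i j : ℕ) :
    ∫ t in (0 : ℝ)..x, mlTerm α β γ a i (x - t) * mlTerm α ζ σ a j t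
      = risingCoeff γ i * risingCoeff σ j * a ^ (i + j)
        * powDivGamma ((i + j : ℕ) * α + (β + ζ)) x := by
  simp only [mlTerm, mul_mul_mul_comm]
  rw [intervalIntegral.integral_const_mul,
    integral_powDivGamma_mul_powDivGamma (by positivity) (by positivity) hx,
    show (i : ℝ) * α + β + (j * α + ζ) = (i + j : ℕ) * α + (β + ζ) by push_cast; ring, pow_add]

theorem integral_mlConvTerm (hα : 0 ≤ α) (hβ : 0 < β) (hζ : 0 < ζ) (hx : 0 < x) (n : ℕ) :
    ∫ t in (0 : ℝ)..x, mlConvTerm α β ζ γ σ a x n t = mlTerm α (β + ζ) (γ + σ) a n x := by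
  simp only [mlConvTerm]
  rw [intervalIntegral.integral_finsetSum fun ij _ =>
      intervalIntegrable_mlTerm_mul_mlTerm a hα hβ hζ hx ij.1 ij.2,
    sum_congr rfl fun ij hij => by
      rw [integral_mlTerm_mul_mlTerm a hα hβ hζ hx, mem_antidiagonal.mp hij],
    ← sum_mul, ← sum_mul, sum_antidiagonal_risingCoeff, mlTerm]

theorem integral_abs_mlConvTerm_le (hα : 0 ≤ α) (hβ : 0 < β) (hζ : 0 < ζ) (hγ : 0 < γ)
    (hσ : 0 < σ) (hx : 0 < x) (n : ℕ) :
    ∫ t in (0 : ℝ)..x, |mlConvTerm α β ζ γ σ a x n t| ≤ mlTerm α (β + ζ) (γ + σ) |a| n x := by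
  rw [← integral_mlConvTerm |a| hα hβ hζ hx n]
  refine intervalIntegral.integral_mono_on hx.le
    (intervalIntegrable_mlConvTerm a hα hβ hζ hx n).abs
    (intervalIntegrable_mlConvTerm |a| hα hβ hζ hx n) fun t ht => ?_
  refine (abs_sum_le_sum_abs _ _).trans (le_of_eq (sum_congr rfl fun ij _ => ?_))
  rw [abs_mul, abs_mlTerm hα hβ hγ, abs_mlTerm hα hζ hσ _ _ ht.1]
  linarith [ht.2]

end Convolution

theorem stmt5 (α β ζ γ σ a x : ℝ) (hα : 0 < α) (hβ : 0 < β) (hζ : 0 < ζ) (hγ : 0 < γ)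
    (hσ : 0 < σ) (hx : 0 < x) :
    (∫ t in (0 : ℝ)..x,
        (x - t) ^ (β - 1) * ml3 α β γ (a * (x - t) ^ α) * (t ^ (ζ - 1) * ml3 α ζ σ (a * t ^ α)))
      = x ^ (β + ζ - 1) * ml3 α (β + ζ) (γ + σ) (a * x ^ α) := by
  have hIoo : ∀ f : ℝ → ℝ, ∫ t in (0 : ℝ)..x, f t = ∫ t in Set.Ioo 0 x, f t := fun f => by
    rw [intervalIntegral.integral_of_le hx.le, integral_Ioc_eq_integral_Ioo]
  have hint : ∀ n, IntegrableOn (mlConvTerm α β ζ γ σ a x n) (Set.Ioo 0 x) :=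
    fun n => (intervalIntegrable_mlConvTerm a hα.le hβ hζ hx n).1.mono_set Set.Ioo_subset_Ioc_self
  have hnorm : Summable fun n => ∫ t in Set.Ioo 0 x, ‖mlConvTerm α β ζ γ σ a x n t‖ := by
    refine (summable_mlTerm hα (β + ζ) (γ + σ) |a| hx).of_nonneg_of_le
      (fun n => integral_nonneg fun t => norm_nonneg _) fun n => ?_
    simpa only [hIoo, Real.norm_eq_abs] using
      integral_abs_mlConvTerm_le a hα.le hβ hζ hγ hσ hx n
  rw [hIoo, setIntegral_congr_fun measurableSet_Ioo fun t ht =>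
      mul_ml3_eq_tsum_mlConvTerm a hα hγ hσ ht,
    ← integral_tsum_of_summable_integral_norm hint hnorm,
    rpow_mul_ml3_eq_tsum α (β + ζ) (add_pos hγ hσ) a hx]
  exact tsum_congr fun n => by rw [← hIoo, integral_mlConvTerm a hα.le hβ hζ hx]
end

section
/- For λ>0, t≥0 and every integer n≥0, the identity λ^{2n} t^{2nα} E^{2n+1}_{α,2nα+1}(−λt^α) + λ^{2n+1} t^{(2n+1)α} E^{2n+2}_{α,(2n+1)α+1}(−λt^α) = λ^{2n} t^{2nα} E^{2n}_{α,2nα+1}(−λt^α) − λ^{2n+2} t^{2(n+1)α} E^{2n+2}_{α,2(n+1)α+1}(−λt^α) holds, i.e. the Beghin–Orsingher pmf of N̂_α(t) coincides with the Cahoy–Polito pmf of N^{α,2}(t). -/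
open Filter Topology

namespace Real

theorem Gamma_add_one_le_Gamma_add_mul_rpow {α y : ℝ} (hα0 : 0 < α) (hα1 : α ≤ 1) (hy : 0 < y) :
    Gamma (y + 1) ≤ Gamma (y + α) * (y + α) ^ (1 - α) := by
  rcases hα1.eq_or_lt with rfl | hα1
  · simp
  have hyα : 0 < y + α := by linarith
  have hconv := Gamma_mul_add_mul_le_rpow_Gamma_mul_rpow_Gamma (s := y + α) (t := y + α + 1)
    hyα (by linarith) hα0 (sub_pos.2 hα1) (add_sub_cancel α 1)
  have hG : 0 < Gamma (y + α) := Gamma_pos_of_pos hyα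
  calc Gamma (y + 1) = Gamma (α * (y + α) + (1 - α) * (y + α + 1)) := by ring_nf
    _ ≤ Gamma (y + α) ^ α * Gamma (y + α + 1) ^ (1 - α) := hconv
    _ = Gamma (y + α) * (y + α) ^ (1 - α) := by
      rw [Gamma_add_one hyα.ne', mul_rpow hyα.le hG.le, mul_left_comm, ← rpow_add hG,
        add_sub_cancel, rpow_one, mul_comm]

theorem Gamma_div_Gamma_add_le {α y : ℝ} (hα0 : 0 < α) (hα1 : α ≤ 1) (hy : 0 < y) :
    Gamma y / Gamma (y + α) ≤ (y + α) ^ (-α) * (1 + α * y⁻¹) := by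
  have hyα : 0 < y + α := add_pos hy hα0
  calc Gamma y / Gamma (y + α) = Gamma (y + 1) / (y * Gamma (y + α)) := by
        rw [Gamma_add_one hy.ne', mul_div_mul_left _ _ hy.ne']
    _ ≤ Gamma (y + α) * (y + α) ^ (1 - α) / (y * Gamma (y + α)) := by
        gcongr
        exact Gamma_add_one_le_Gamma_add_mul_rpow hα0 hα1 hy
    _ = (y + α) ^ (-α) * (1 + α * y⁻¹) := by
        have := Gamma_pos_of_pos hyα
        rw [sub_eq_add_neg, rpow_add hyα, rpow_one]
        field_simp

theorem tendsto_Gamma_div_Gamma_add_atTop_s6 {α : ℝ} (hα0 : 0 < α) (hα1 : α ≤ 1) :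
    Tendsto (fun y => Gamma y / Gamma (y + α)) atTop (𝓝 0) := by
  have hbound : Tendsto (fun y : ℝ => (y + α) ^ (-α) * (1 + α * y⁻¹)) atTop (𝓝 0) := by
    simpa using ((tendsto_rpow_neg_atTop hα0).comp
      (tendsto_atTop_add_const_right _ α tendsto_id)).mul
        ((tendsto_inv_atTop_zero.const_mul α).const_add 1)
  refine tendsto_of_tendsto_of_tendsto_of_le_of_le' tendsto_const_nhds hbound ?_ ?_
  all_goals filter_upwards [eventually_gt_atTop 0] with y hy
  · have := Gamma_pos_of_pos hy
    have := Gamma_pos_of_pos (add_pos hy hα0)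
    positivity
  · exact Gamma_div_Gamma_add_le hα0 hα1 hy

end Real

noncomputable def ml3Term (α β γ x : ℝ) (j : ℕ) : ℝ :=
  Real.Gamma ((j : ℝ) + γ) * x ^ j / ((j.factorial : ℝ) * Real.Gamma ((j : ℝ) * α + β))

section ml3Term

variable {α β γ x : ℝ}

theorem ml3_of_ne_zero (hγ : γ ≠ 0) : ml3 α β γ x = 1 / Real.Gamma γ * ∑' j, ml3Term α β γ x j :=
  if_neg hγ

theorem ml3Term_zero : ml3Term α β γ x 0 = Real.Gamma γ / Real.Gamma β := by
  simp [ml3Term]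

theorem ml3Term_succ {j : ℕ} (hj : γ + j ≠ 0) (hΓ : Real.Gamma (j * α + β) ≠ 0) :
    ml3Term α β γ x (j + 1) =
      (γ + j) / (1 + j) * x * (Real.Gamma (j * α + β) / Real.Gamma (j * α + β + α)) *
        ml3Term α β γ x j := by
  simp only [ml3Term, Nat.factorial_succ]
  push_cast
  rw [show (j + 1 : ℝ) + γ = (γ + j) + 1 by ring, Real.Gamma_add_one hj,
    show ((j : ℝ) + 1) * α + β = j * α + β + α by ring, add_comm (j : ℝ) γ]
  field_simp
  ring

theorem summable_ml3Term (hα0 : 0 < α) (hα1 : α ≤ 1) (β γ x : ℝ) : Summable (ml3Term α β γ x) := by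
  have hy : Tendsto (fun j : ℕ => (j : ℝ) * α + β) atTop atTop :=
    tendsto_atTop_add_const_right _ β (tendsto_natCast_atTop_atTop.atTop_mul_const hα0)
  have hratio : Tendsto (fun j : ℕ => ‖(γ + j) / (1 + j) * x *
      (Real.Gamma (j * α + β) / Real.Gamma (j * α + β + α))‖) atTop (𝓝 0) := by
    have hfrac : Tendsto (fun j : ℕ => (γ + j) / (1 + j)) atTop (𝓝 1) := by
      simpa using tendsto_add_mul_div_add_mul_atTop_nhds γ 1 (1 : ℝ) one_ne_zero
    simpa using (((hfrac.mul_const x).mul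
      ((Real.tendsto_Gamma_div_Gamma_add_atTop_s6 hα0 hα1).comp hy)).norm)
  refine summable_of_ratio_norm_eventually_le (r := 1 / 2) (by norm_num) ?_
  filter_upwards [hratio.eventually_le_const (by norm_num : (0 : ℝ) < 1 / 2),
    hy.eventually_gt_atTop 0, tendsto_natCast_atTop_atTop.eventually_gt_atTop (-γ)]
    with j hj hyj hγj
  rw [ml3Term_succ (by linarith) (Real.Gamma_pos_of_pos hyj).ne', norm_mul]
  gcongr

theorem ml3Term_add_one_succ {j : ℕ} (hj : γ + 1 + j ≠ 0) :
    ml3Term α β (γ + 1) x (j + 1) =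
      x * ml3Term α (β + α) (γ + 1) x j + γ * ml3Term α β γ x (j + 1) := by
  simp only [ml3Term, Nat.factorial_succ]
  push_cast
  rw [show (j + 1 : ℝ) + (γ + 1) = (γ + 1 + j) + 1 by ring, Real.Gamma_add_one hj,
    show ((j : ℝ) + 1) * α + β = j * α + (β + α) by ring,
    show (j : ℝ) + (γ + 1) = γ + 1 + j by ring, show (j : ℝ) + 1 + γ = γ + 1 + j by ring]
  field_simp
  ring

theorem tsum_ml3Term_add_one (hα0 : 0 < α) (hα1 : α ≤ 1) (hγ : 0 ≤ γ) :
    ∑' j, ml3Term α β (γ + 1) x j = Real.Gamma (γ + 1) / Real.Gamma β +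
      x * ∑' j, ml3Term α (β + α) (γ + 1) x j + γ * ∑' j, ml3Term α β γ x (j + 1) := by
  have hsucc := (summable_nat_add_iff 1).2 (summable_ml3Term hα0 hα1 β γ x)
  rw [(summable_ml3Term hα0 hα1 β (γ + 1) x).tsum_eq_zero_add, ml3Term_zero, add_assoc,
    ← tsum_mul_left, ← tsum_mul_left, ← Summable.tsum_add
      ((summable_ml3Term hα0 hα1 _ _ x).mul_left x) (hsucc.mul_left γ)]
  congr 2 with j
  exact ml3Term_add_one_succ (by positivity)

theorem ml3_eq_ml3_add_one_sub (hα0 : 0 < α) (hα1 : α ≤ 1) (hγ : 0 ≤ γ) :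
    ml3 α β γ x = ml3 α β (γ + 1) x - x * ml3 α (β + α) (γ + 1) x := by
  have hγ1 : γ + 1 ≠ 0 := by positivity
  rw [ml3_of_ne_zero hγ1, ml3_of_ne_zero hγ1, tsum_ml3Term_add_one hα0 hα1 hγ]
  rcases hγ.eq_or_lt with rfl | hγ
  -- the leftover term `Γ(1) / Γ(β)` is exactly the convention `E^0_{α,β} = 1 / Γ(β)`
  · simp [ml3]
  rw [ml3_of_ne_zero hγ.ne', (summable_ml3Term hα0 hα1 β γ x).tsum_eq_zero_add, ml3Term_zero,
    Real.Gamma_add_one hγ.ne']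
  have : Real.Gamma γ ≠ 0 := (Real.Gamma_pos_of_pos hγ).ne'
  field_simp
  ring

end ml3Term

theorem stmt6_general (α l t : ℝ) (hα0 : 0 < α) (hα1 : α ≤ 1) (ht : 0 ≤ t) (n : ℕ) :
    l ^ (2 * n) * t ^ (2 * (n : ℝ) * α) * ml3 α (2 * (n : ℝ) * α + 1) (2 * (n : ℝ) + 1) (-(l * t ^ α))
      + l ^ (2 * n + 1) * t ^ ((2 * (n : ℝ) + 1) * α) * ml3 α ((2 * (n : ℝ) + 1) * α + 1) (2 * (n : ℝ) + 2) (-(l * t ^ α))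
    = l ^ (2 * n) * t ^ (2 * (n : ℝ) * α) * ml3 α (2 * (n : ℝ) * α + 1) (2 * (n : ℝ)) (-(l * t ^ α))
      - l ^ (2 * n + 2) * t ^ (2 * ((n : ℝ) + 1) * α) * ml3 α (2 * ((n : ℝ) + 1) * α + 1) (2 * (n : ℝ) + 2) (-(l * t ^ α)) := by
  have hpow (k : ℕ) : t ^ ((k : ℝ) * α) = (t ^ α) ^ k := by rw [mul_comm, Real.rpow_mul_natCast ht]
  have hE₀ := ml3_eq_ml3_add_one_sub (β := 2 * n * α + 1) (x := -(l * t ^ α)) hα0 hα1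
    (by positivity : (0 : ℝ) ≤ 2 * n)
  have hE₁ := ml3_eq_ml3_add_one_sub (β := (2 * n + 1) * α + 1) (x := -(l * t ^ α)) hα0 hα1
    (by positivity : (0 : ℝ) ≤ 2 * n + 1)
  rw [show 2 * (n : ℝ) * α + 1 + α = (2 * n + 1) * α + 1 by ring] at hE₀
  rw [show (2 * n + 1) * α + 1 + α = 2 * ((n : ℝ) + 1) * α + 1 by ring,
    show (2 * n + 1 : ℝ) + 1 = 2 * n + 2 by ring] at hE₁
  rw [hE₀, hE₁, show 2 * (n : ℝ) * α = ((2 * n : ℕ) : ℝ) * α by push_cast; ring,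
    show (2 * n + 1 : ℝ) * α = ((2 * n + 1 : ℕ) : ℝ) * α by push_cast; ring,
    show 2 * ((n : ℝ) + 1) * α = ((2 * n + 2 : ℕ) : ℝ) * α by push_cast; ring, hpow, hpow, hpow]
  ring

theorem stmt6 (α l t : ℝ) (hα0 : 0 < α) (hα1 : α ≤ 1) (hl : 0 < l) (ht : 0 ≤ t) (n : ℕ) :
    l ^ (2 * n) * t ^ (2 * (n : ℝ) * α) * ml3 α (2 * (n : ℝ) * α + 1) (2 * (n : ℝ) + 1) (-(l * t ^ α))
      + l ^ (2 * n + 1) * t ^ ((2 * (n : ℝ) + 1) * α) * ml3 α ((2 * (n : ℝ) + 1) * α + 1) (2 * (n : ℝ) + 2) (-(l * t ^ α))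
    = l ^ (2 * n) * t ^ (2 * (n : ℝ) * α) * ml3 α (2 * (n : ℝ) * α + 1) (2 * (n : ℝ)) (-(l * t ^ α))
      - l ^ (2 * n + 2) * t ^ (2 * ((n : ℝ) + 1) * α) * ml3 α (2 * ((n : ℝ) + 1) * α + 1) (2 * (n : ℝ) + 2) (-(l * t ^ α)) :=
  stmt6_general α l t hα0 hα1 ht n
end

section
/- For λ>0, t≥0 and every integer r≥1, the r-th factorial moment of N̂(t) equals r! λ^{2r} t^{2r} E^r_{1,2r+1}(−2λt), i.e. Σ_{n=0}^∞ n(n−1)⋯(n−r+1) · ((λt)^{2n}/(2n)! + (λt)^{2n+1}/(2n+1)!) e^{−λt} = r! λ^{2r} t^{2r} E^r_{1,2r+1}(−2λt). -/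
/-!
With `x = λt`, the law of `N̂(t)` is that of `⌊M / 2⌋` for `M` Poisson of mean `x`, so the `r`-th
factorial moment is `r! e^{-x} ∑ₘ C(⌊m/2⌋, r) xᵐ / m!`. Against the Poisson weights, any `f`
satisfies Newton's formula `e^{-x} ∑ₘ f(m) xᵐ / m! = ∑ₐ Δᵃf(0) xᵃ / a!`. For
`cᵣ(m) = C(⌊m/2⌋, r)` Pascal's rule gives `c_{r+1}(m + 2) - c_{r+1}(m) = cᵣ(m)`, i.e.
`(Δ² + 2Δ) c_{r+1} = cᵣ`, and this recursion yields `Δᵃcᵣ(0) = 0` for `a < 2r` and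
`Δ^{j+2r}cᵣ(0) = (-2)ʲ C(r+j-1, j)`. Since `Γ(j+r) / (Γ(r) j!) = C(r+j-1, j)`, the resulting
series is `x^{2r} E^r_{1,2r+1}(-2x)`.
-/

open Finset fwdDiff
open scoped Nat

def halfChoose (r m : ℕ) : ℤ := (m / 2).choose r

theorem halfChoose_succ_add_two (r m : ℕ) :
    halfChoose (r + 1) (m + 2) = halfChoose (r + 1) m + halfChoose r m := by
  simp only [halfChoose, show (m + 2) / 2 = m / 2 + 1 by omega, Nat.choose_succ_succ',
    Nat.cast_add]
  ring

theorem fwdDiff_fwdDiff_add_two_smul_halfChoose (r : ℕ) :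
    Δ_[1] (Δ_[1] (halfChoose (r + 1))) + 2 • Δ_[1] (halfChoose (r + 1)) = halfChoose r := by
  funext m
  simp only [fwdDiff, Pi.add_apply, Pi.smul_apply, add_assoc, one_add_one_eq_two,
    halfChoose_succ_add_two]
  ring

-- The space in `Δ_[1] ^[a]` is needed: `]^` is a token of the exterior power notation.
theorem fwdDiff_iter_halfChoose_succ (r a : ℕ) :
    Δ_[1] ^[a + 2] (halfChoose (r + 1)) 0
      = Δ_[1] ^[a] (halfChoose r) 0 - 2 * Δ_[1] ^[a + 1] (halfChoose (r + 1)) 0 := by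
  have h := congrFun (congrArg (Δ_[1] ^[a]) (fwdDiff_fwdDiff_add_two_smul_halfChoose r)) 0
  rw [fwdDiff_iter_add, fwdDiff_iter_const_smul, Pi.add_apply, Pi.smul_apply, nsmul_eq_mul,
    Nat.cast_ofNat] at h
  simp only [Function.iterate_succ_apply]
  linarith

theorem fwdDiff_iter_halfChoose_of_lt : ∀ {r a : ℕ}, a < 2 * r → Δ_[1] ^[a] (halfChoose r) 0 = 0
  | r + 1, 0, _ => by simp [halfChoose]
  | r + 1, 1, _ => by simp [fwdDiff, halfChoose]
  | r + 1, a + 2, h => by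
    rw [fwdDiff_iter_halfChoose_succ, fwdDiff_iter_halfChoose_of_lt (r := r) (by omega),
      fwdDiff_iter_halfChoose_of_lt (r := r + 1) (a := a + 1) (by omega), mul_zero, sub_zero]

theorem fwdDiff_iter_halfChoose_add_two_mul (r j : ℕ) :
    Δ_[1] ^[j + 2 * r] (halfChoose r) 0 = (-2) ^ j * r.multichoose j := by
  induction r generalizing j with
  | zero =>
    cases j with
    | zero => simp [halfChoose]
    | succ j =>
      have hconst : halfChoose 0 = fun _ ↦ 1 := by funext m; simp [halfChoose]
      rw [mul_zero, add_zero, Function.iterate_succ_apply, hconst, fwdDiff_const,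
        Function.iterate_fixed (fwdDiff_const (1 : ℕ) (0 : ℤ))]
      simp
  | succ r ih =>
    induction j with
    | zero =>
      have hdiag : Δ_[1] ^[2 * r] (halfChoose r) 0 = 1 := by simpa using ih 0
      rw [show 0 + 2 * (r + 1) = 2 * r + 2 by ring, fwdDiff_iter_halfChoose_succ, hdiag,
        fwdDiff_iter_halfChoose_of_lt (by omega)]
      simp
    | succ j ihj =>
      rw [show j + 1 + 2 * (r + 1) = (j + 1 + 2 * r) + 2 by ring, fwdDiff_iter_halfChoose_succ,
        ih, show j + 1 + 2 * r + 1 = j + 2 * (r + 1) by ring, ihj, Nat.multichoose_succ_succ]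
      push_cast
      ring

theorem summable_norm_mul_pow_div_factorial {f : ℕ → ℝ} {C : ℝ} (hf : ∀ m, |f m| ≤ C ^ m)
    (x : ℝ) : Summable fun m ↦ ‖f m * (x ^ m / m !)‖ := by
  refine (Real.summable_pow_div_factorial (C * |x|)).of_nonneg_of_le (fun _ ↦ norm_nonneg _)
    fun m ↦ ?_
  rw [norm_mul, norm_div, norm_pow, Real.norm_eq_abs, Real.norm_eq_abs, RCLike.norm_natCast,
    mul_pow, mul_div_assoc]
  gcongr
  exact hf m

theorem hasSum_fwdDiff_iter_mul_pow_div_factorial {f : ℕ → ℝ} {x : ℝ}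
    (hf : Summable fun m ↦ ‖f m * (x ^ m / m !)‖) :
    HasSum (fun a ↦ Δ_[1] ^[a] f 0 * (x ^ a / a !))
      ((∑' m, f m * (x ^ m / m !)) * Real.exp (-x)) := by
  have hexp : Summable fun m ↦ ‖(-x) ^ m / (m ! : ℝ)‖ := by
    simpa [norm_div, norm_pow] using Real.summable_pow_div_factorial |x|
  rw [Real.exp_eq_exp_ℝ, ← (NormedSpace.expSeries_div_hasSum_exp (-x)).tsum_eq]
  convert! hasSum_sum_range_mul_of_summable_norm hf hexp using 2 with a
  rw [fwdDiff_iter_eq_sum_shift, sum_mul]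
  refine sum_congr rfl fun k hk ↦ ?_
  obtain ⟨i, rfl⟩ : ∃ i, a = i + k := ⟨a - k, by grind⟩
  have hfact : ((i + k).choose k * i ! * k ! : ℝ) = (i + k)! := by
    exact_mod_cast Nat.add_choose_mul_factorial_mul_factorial i k
  have hchoose : ((i + k).choose k : ℝ) ≠ 0 :=
    Nat.cast_ne_zero.2 (Nat.choose_pos (Nat.le_add_left k i)).ne'
  rw [Nat.add_sub_cancel, ← hfact]
  simp only [zero_add, smul_eq_mul, mul_one, zsmul_eq_mul]
  push_cast
  rw [neg_pow x, pow_add]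
  field_simp

theorem abs_halfChoose_le (r m : ℕ) : |(halfChoose r m : ℝ)| ≤ 2 ^ m := by
  rw [halfChoose, Int.cast_natCast, Nat.abs_cast]
  exact_mod_cast (Nat.choose_le_two_pow _ _).trans
    (Nat.pow_le_pow_right two_pos (Nat.div_le_self m 2))

theorem hasSum_multichoose_mul_pow_div_factorial (r : ℕ) (x : ℝ) :
    HasSum (fun j : ℕ ↦ (-2) ^ j * (r.multichoose j : ℝ) * (x ^ (j + 2 * r) / (j + 2 * r)!))
      ((∑' m, (halfChoose r m : ℝ) * (x ^ m / m !)) * Real.exp (-x)) := by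
  have hcast (a : ℕ) : Δ_[1] ^[a] (fun m ↦ (halfChoose r m : ℝ)) 0
      = ((Δ_[1] ^[a] (halfChoose r) 0 : ℤ) : ℝ) := by
    simp [fwdDiff_iter_eq_sum_shift]
  have h := hasSum_fwdDiff_iter_mul_pow_div_factorial
    (summable_norm_mul_pow_div_factorial (abs_halfChoose_le r) x)
  have hvanish : ∑ a ∈ range (2 * r), ((Δ_[1] ^[a] (halfChoose r) 0 : ℤ) : ℝ) * (x ^ a / a !)
      = 0 :=
    sum_eq_zero fun a ha ↦ by
      rw [fwdDiff_iter_halfChoose_of_lt (mem_range.1 ha), Int.cast_zero, zero_mul]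
  rw [← hasSum_nat_add_iff' (2 * r)] at h
  simpa [hcast, fwdDiff_iter_halfChoose_add_two_mul, hvanish] using h

theorem tsum_descFactorial_mul_pow_div_factorial (r : ℕ) (x : ℝ) :
    ∑' n : ℕ, (n.descFactorial r : ℝ) *
        ((x ^ (2 * n) / (2 * n)! + x ^ (2 * n + 1) / (2 * n + 1)!) * Real.exp (-x))
      = r ! * ((∑' m, (halfChoose r m : ℝ) * (x ^ m / m !)) * Real.exp (-x)) := by
  set g : ℕ → ℝ := fun m ↦ (halfChoose r m : ℝ) * (x ^ m / m !)
  have hg : Summable g := (summable_norm_mul_pow_div_factorial (abs_halfChoose_le r) x).of_norm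
  have heven : Summable fun n ↦ g (2 * n) :=
    hg.comp_injective (mul_right_injective₀ two_ne_zero)
  have hodd : Summable fun n ↦ g (2 * n + 1) :=
    hg.comp_injective ((add_left_injective 1).comp (mul_right_injective₀ two_ne_zero))
  have hterm (n : ℕ) : (n.descFactorial r : ℝ) *
      ((x ^ (2 * n) / (2 * n)! + x ^ (2 * n + 1) / (2 * n + 1)!) * Real.exp (-x))
        = r ! * ((g (2 * n) + g (2 * n + 1)) * Real.exp (-x)) := by
    simp only [g, halfChoose, Nat.descFactorial_eq_factorial_mul_choose,
      show 2 * n / 2 = n by omega, show (2 * n + 1) / 2 = n by omega]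
    push_cast
    ring
  rw [tsum_congr hterm, tsum_mul_left, tsum_mul_right, heven.tsum_add hodd,
    tsum_even_add_odd heven hodd]

theorem ml3_one_two_mul_add_one (r : ℕ) (z : ℝ) :
    ml3 1 (2 * r + 1) r z = ∑' j : ℕ, (r.multichoose j : ℝ) * z ^ j / (j + 2 * r)! := by
  cases r with
  | zero =>
    rw [tsum_eq_single 0 fun j hj ↦ by
      rw [← Nat.succ_pred_eq_of_ne_zero hj, Nat.multichoose_zero_succ]; simp]
    simp [ml3]
  | succ s =>
    have hΓ (j : ℕ) : Real.Gamma (j + (s + 1 : ℕ)) = (j + s)! := by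
      rw [show (j : ℝ) + (s + 1 : ℕ) = (j + s : ℕ) + 1 by push_cast; ring,
        Real.Gamma_nat_eq_factorial]
    have hfact (j : ℕ) : ((s + 1).multichoose j * j ! * s ! : ℝ) = (j + s)! := by
      rw [Nat.multichoose_eq, show s + 1 + j - 1 = s + j by omega, mul_right_comm, add_comm j]
      exact_mod_cast Nat.add_choose_mul_factorial_mul_factorial s j
    rw [ml3, if_neg (by positivity), ← tsum_mul_left]
    refine tsum_congr fun j ↦ ?_
    rw [hΓ, show (j : ℝ) * 1 + (2 * (s + 1 : ℕ) + 1) = (j + 2 * (s + 1) : ℕ) + 1 by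
        push_cast; ring,
      Real.Gamma_nat_eq_factorial, Nat.cast_succ s, Real.Gamma_nat_eq_factorial, ← hfact]
    field_simp

theorem stmt8_general (l t : ℝ) (r : ℕ) :
    ∑' n : ℕ, (n.descFactorial r : ℝ) * (((l * t) ^ (2 * n) / ((2 * n).factorial : ℝ)
          + (l * t) ^ (2 * n + 1) / ((2 * n + 1).factorial : ℝ)) * Real.exp (-(l * t)))
      = (r.factorial : ℝ) * l ^ (2 * r) * t ^ (2 * r) * ml3 1 (2 * (r : ℝ) + 1) (r : ℝ) (-(2 * l * t)) := by
  rw [tsum_descFactorial_mul_pow_div_factorial,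
    ← (hasSum_multichoose_mul_pow_div_factorial r (l * t)).tsum_eq, ml3_one_two_mul_add_one,
    ← tsum_mul_left, ← tsum_mul_left]
  exact tsum_congr fun j ↦ by ring

theorem stmt8 (l t : ℝ) (hl : 0 < l) (ht : 0 ≤ t) (r : ℕ) (hr : 1 ≤ r) :
    ∑' n : ℕ, (n.descFactorial r : ℝ) * (((l * t) ^ (2 * n) / ((2 * n).factorial : ℝ)
          + (l * t) ^ (2 * n + 1) / ((2 * n + 1).factorial : ℝ)) * Real.exp (-(l * t)))
      = (r.factorial : ℝ) * l ^ (2 * r) * t ^ (2 * r) * ml3 1 (2 * (r : ℝ) + 1) (r : ℝ) (-(2 * l * t)) :=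
  stmt8_general l t r
end

section
/- For a fixed t>0, the random variable N̂(t)/E(N̂(t)) converges in probability to 1 as λ → ∞, where N̂(t) has pmf p̂(n,t) = ((λt)^{2n}/(2n)! + (λt)^{2n+1}/(2n+1)!) e^{−λt} and mean m(λ) = (2λt − 1 + e^{−2λt})/4. Equivalently, lim_{λ→∞} Σ_{n=0}^∞ |n/m(λ) − 1| p̂(n,t) = 0. -/
/-!
Put `x = λt` and let `K` be Poisson with mean `x`. Then `p̂(n, t) = P(K = 2n) + P(K = 2n + 1)`,
so `N̂(t)` has the law of `⌊K / 2⌋` and the sum is `E|⌊K / 2⌋ / m - 1|`. Since `|x - 2m| ≤ 1/2`,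
we have `|⌊K / 2⌋ - m| ≤ (|K - x| + 3/2) / 2`, and `E|K - x| ≤ √(Var K) = √x`; hence the sum is
at most `(√x + 3/2) / (2m) = O(x^(-1/2))`.
-/

open Filter Real
open scoped NNReal Nat

namespace ProbabilityTheory

variable (r : ℝ≥0)

lemma hasSum_descFactorial_mul_poisson (j : ℕ) :
    HasSum (fun k : ℕ => (k.descFactorial j : ℝ) * (exp (-r) * r ^ k / k !)) ((r : ℝ) ^ j) := by
  induction j with
  | zero => simpa using hasSum_one_poissonMeasure r
  | succ j ih =>
    have hshift : ∀ k : ℕ, ((k + 1).descFactorial (j + 1) : ℝ) * (exp (-r) * r ^ (k + 1) / (k + 1)!)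
        = r * ((k.descFactorial j : ℝ) * (exp (-r) * r ^ k / k !)) := fun k => by
      rw [Nat.succ_descFactorial_succ, Nat.factorial_succ]
      push_cast
      field_simp
      ring
    have hsucc := (hasSum_nat_add_iff (f := fun k : ℕ =>
      (k.descFactorial (j + 1) : ℝ) * (exp (-r) * r ^ k / k !)) 1).mp
      (by simpa only [hshift] using ih.mul_left (r : ℝ))
    simpa [pow_succ, mul_comm] using hsucc

lemma hasSum_mul_poisson : HasSum (fun k : ℕ => (k : ℝ) * (exp (-r) * r ^ k / k !)) r := by
  simpa using hasSum_descFactorial_mul_poisson r 1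

lemma hasSum_sub_sq_mul_poisson :
    HasSum (fun k : ℕ => ((k : ℝ) - r) ^ 2 * (exp (-r) * r ^ k / k !)) r := by
  convert ((hasSum_descFactorial_mul_poisson r 2).add
    ((hasSum_mul_poisson r).mul_left (1 - 2 * (r : ℝ)))).add
    ((hasSum_one_poissonMeasure r).mul_left ((r : ℝ) ^ 2)) using 1
  · ext k
    rw [Nat.cast_descFactorial_two]
    ring
  · ring

lemma summable_abs_sub_mul_poisson :
    Summable (fun k : ℕ => |(k : ℝ) - r| * (exp (-r) * r ^ k / k !)) := by
  refine Summable.of_nonneg_of_le (fun k => by positivity) (fun k => ?_)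
    ((hasSum_mul_poisson r).summable.add ((hasSum_one_poissonMeasure r).summable.mul_left (r : ℝ)))
  rw [← add_mul]
  gcongr
  exact (abs_sub _ _).trans (by simp)

lemma tsum_abs_sub_mul_poisson_le_sqrt (hr : 0 < r) :
    ∑' k : ℕ, |(k : ℝ) - r| * (exp (-r) * r ^ k / k !) ≤ √r := by
  have hc : 0 < √(r : ℝ) := Real.sqrt_pos.mpr (by exact_mod_cast hr)
  -- AM-GM with weight `√r`; summed against the Poisson weights it becomes `r / (2√r) + √r / 2`
  have hamgm : ∀ d : ℝ, |d| ≤ d ^ 2 / (2 * √r) + √r / 2 := fun d => by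
    rw [div_add_div _ _ (by positivity) two_ne_zero, le_div_iff₀ (by positivity)]
    nlinarith [sq_abs d, sq_nonneg (|d| - √r), Real.sq_sqrt r.coe_nonneg]
  calc ∑' k : ℕ, |(k : ℝ) - r| * (exp (-r) * r ^ k / k !)
      ≤ r / (2 * √r) + √r / 2 * 1 := by
        refine hasSum_le (fun k => ?_) (summable_abs_sub_mul_poisson r).hasSum
          (((hasSum_sub_sq_mul_poisson r).div_const (2 * √r)).add
            ((hasSum_one_poissonMeasure r).mul_left (√r / 2)))
        convert mul_le_mul_of_nonneg_right (hamgm ((k : ℝ) - r))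
          (by positivity : (0 : ℝ) ≤ exp (-r) * r ^ k / k !) using 1
        ring
    _ = √r := by
        have := Real.sq_sqrt r.coe_nonneg
        field_simp
        linarith

lemma abs_natCast_div_two_div_sub_one_le (k : ℕ) {x m : ℝ} (hm : 0 < m)
    (hxm : |x - 2 * m| ≤ 1 / 2) :
    |((k / 2 : ℕ) : ℝ) / m - 1| ≤ (|(k : ℝ) - x| + 3 / 2) / (2 * m) := by
  have hlo : (k : ℝ) ≤ 2 * ((k / 2 : ℕ) : ℝ) + 1 := by
    exact_mod_cast (by omega : k ≤ 2 * (k / 2) + 1)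
  have hhi : 2 * ((k / 2 : ℕ) : ℝ) ≤ k := by exact_mod_cast Nat.mul_div_le k 2
  rw [div_sub_one hm.ne', abs_div, abs_of_pos hm, div_le_div_iff₀ hm (by positivity)]
  rw [abs_le] at hxm
  cases abs_cases ((k : ℝ) - x) <;> cases abs_cases (((k / 2 : ℕ) : ℝ) - m) <;> nlinarith

lemma hasSum_abs_sub_add_div_mul_poisson (m : ℝ) :
    HasSum (fun k : ℕ => (|(k : ℝ) - r| + 3 / 2) / (2 * m) * (exp (-r) * r ^ k / k !))
      ((∑' k : ℕ, |(k : ℝ) - r| * (exp (-r) * r ^ k / k !) + 3 / 2) / (2 * m)) := by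
  have h := ((summable_abs_sub_mul_poisson r).hasSum.add
    ((hasSum_one_poissonMeasure r).mul_left (3 / 2))).div_const (2 * m)
  rw [mul_one] at h
  exact h.congr_fun fun k => by ring

variable {r}

lemma summable_abs_natCast_div_two_div_sub_one_mul_poisson {m : ℝ} (hm : 0 < m)
    (hrm : |r - 2 * m| ≤ 1 / 2) :
    Summable (fun k : ℕ => |((k / 2 : ℕ) : ℝ) / m - 1| * (exp (-r) * r ^ k / k !)) :=
  Summable.of_nonneg_of_le (fun k => by positivity) (fun k => mul_le_mul_of_nonneg_right
    (abs_natCast_div_two_div_sub_one_le k hm hrm) (by positivity))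
    (hasSum_abs_sub_add_div_mul_poisson r m).summable

lemma tsum_abs_natCast_div_two_div_sub_one_mul_poisson_le (hr : 0 < r) {m : ℝ} (hm : 0 < m)
    (hrm : |r - 2 * m| ≤ 1 / 2) :
    ∑' k : ℕ, |((k / 2 : ℕ) : ℝ) / m - 1| * (exp (-r) * r ^ k / k !) ≤ (√r + 3 / 2) / (2 * m) :=
  calc _ ≤ (∑' k : ℕ, |(k : ℝ) - r| * (exp (-r) * r ^ k / k !) + 3 / 2) / (2 * m) :=
        hasSum_le (fun k => mul_le_mul_of_nonneg_right
          (abs_natCast_div_two_div_sub_one_le k hm hrm) (by positivity))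
          (summable_abs_natCast_div_two_div_sub_one_mul_poisson hm hrm).hasSum
          (hasSum_abs_sub_add_div_mul_poisson r m)
    _ ≤ (√r + 3 / 2) / (2 * m) := by
        gcongr
        exact tsum_abs_sub_mul_poisson_le_sqrt r hr

end ProbabilityTheory

open ProbabilityTheory

lemma tsum_abs_div_halfPoissonMean_sub_one_le (x : ℝ) (hx : 1 ≤ x) :
    ∑' n : ℕ, |(n : ℝ) / ((2 * x - 1 + exp (-(2 * x))) / 4) - 1| *
        ((x ^ (2 * n) / ((2 * n)! : ℝ) + x ^ (2 * n + 1) / ((2 * n + 1)! : ℝ)) * exp (-x))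
      ≤ 5 / √x := by
  have hexp : exp (-(2 * x)) ≤ 1 := exp_le_one_iff.mpr (by linarith)
  have hm : x / 4 ≤ (2 * x - 1 + exp (-(2 * x))) / 4 := by linarith [exp_pos (-(2 * x))]
  have hxm : |x - 2 * ((2 * x - 1 + exp (-(2 * x))) / 4)| ≤ 1 / 2 :=
    abs_le.mpr ⟨by linarith, by linarith [exp_pos (-(2 * x))]⟩
  set m := (2 * x - 1 + exp (-(2 * x))) / 4
  have hm0 : 0 < m := by linarith
  lift x to ℝ≥0 using by linarith
  have hx0 : 0 < x := by exact_mod_cast (by linarith : (0 : ℝ) < x)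
  set g : ℕ → ℝ := fun k => |((k / 2 : ℕ) : ℝ) / m - 1| * (exp (-x) * x ^ k / k !)
  have hg := summable_abs_natCast_div_two_div_sub_one_mul_poisson hm0 hxm
  have heven : Summable fun n => g (2 * n) :=
    hg.comp_injective (mul_right_injective₀ two_ne_zero)
  have hodd : Summable fun n => g (2 * n + 1) :=
    hg.comp_injective fun a b (h : 2 * a + 1 = 2 * b + 1) => by omega
  calc _ = ∑' n : ℕ, (g (2 * n) + g (2 * n + 1)) := by
        refine tsum_congr fun n => ?_
        simp only [g, show (2 * n) / 2 = n by omega, show (2 * n + 1) / 2 = n by omega]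
        ring
    _ = ∑' k : ℕ, g k := by rw [heven.tsum_add hodd, tsum_even_add_odd heven hodd]
    _ ≤ (√x + 3 / 2) / (2 * m) :=
        tsum_abs_natCast_div_two_div_sub_one_mul_poisson_le hx0 hm0 hxm
    _ ≤ 5 / √x := by
        have hs : 1 ≤ √(x : ℝ) := Real.one_le_sqrt.mpr hx
        have hss := Real.sq_sqrt x.coe_nonneg
        rw [div_le_div_iff₀ (by linarith) (by linarith)]
        nlinarith

theorem stmt11 (t : ℝ) (ht : 0 < t) :
    Filter.Tendsto (fun l : ℝ =>
        ∑' n : ℕ, |(n : ℝ) / ((2 * l * t - 1 + Real.exp (-(2 * l * t))) / 4) - 1| *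
          (((l * t) ^ (2 * n) / ((2 * n).factorial : ℝ)
            + (l * t) ^ (2 * n + 1) / ((2 * n + 1).factorial : ℝ)) * Real.exp (-(l * t))))
      Filter.atTop (nhds 0) := by
  have hx : Tendsto (fun l : ℝ => l * t) atTop atTop := tendsto_id.atTop_mul_const ht
  have hbound : Tendsto (fun x : ℝ => 5 / √x) atTop (nhds 0) :=
    tendsto_const_nhds.div_atTop tendsto_sqrt_atTop
  refine squeeze_zero' ?_ ?_ (hbound.comp hx)
  · filter_upwards [hx.eventually_ge_atTop 0] with l hl
    exact tsum_nonneg fun n => by positivity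
  · filter_upwards [hx.eventually_ge_atTop 1] with l hl
    simpa only [mul_assoc, Function.comp_apply] using
      tsum_abs_div_halfPoissonMean_sub_one_le (l * t) hl
end
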